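/- Let F be a free group with basis {g_j | j ∈ J}, K ⊆ J, H the subgroup generated by {g_j | j ∈ K}, R a normal subgroup of F, and M the set of normal subgroups of F contained in R. Suppose that for every N ∈ M and every v ∈ N, the condition D_k(v) ≡ 0 mod ℤ[F]·(N−1) for all k ∈ J \ K implies v ∈ [N,N]. Then H ∩ R = 1. -/

import Mathlib

open scoped Classical

/-- The augmentation map `ℤ[F] → ℤ` induced by the trivial homomorphism `F → 1`. -/
noncomputable def aug (J : Type) : MonoidAlgebra ℤ (FreeGroup J) →ₐ[ℤ] ℤ :=
  MonoidAlgebra.lift ℤ ℤ (FreeGroup J) 1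

/-- `D` is the Fox derivative of `ℤ[F]` with respect to the generator `g_k`:
it is ℤ-linear, satisfies `D(uv) = D(u)v + ε(u)D(v)`, and sends `g_j` to `δ_{kj}`. -/
def IsFoxDerivative {J : Type} (k : J)
    (D : MonoidAlgebra ℤ (FreeGroup J) →ₗ[ℤ] MonoidAlgebra ℤ (FreeGroup J)) : Prop :=
  (∀ u v : MonoidAlgebra ℤ (FreeGroup J), D (u * v) = D u * v + (aug J u) • D v) ∧
  (∀ j : J, D (MonoidAlgebra.of ℤ (FreeGroup J) (FreeGroup.of j)) = if k = j then 1 else 0)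

/-- The ideal `ℤ[F]·(N−1)` of `ℤ[F]` generated by the elements `n − 1`, `n ∈ N`. -/
noncomputable def NIdeal {J : Type} (N : Subgroup (FreeGroup J)) :
    Submodule ℤ (MonoidAlgebra ℤ (FreeGroup J)) :=
  Submodule.span ℤ {a | ∃ u : MonoidAlgebra ℤ (FreeGroup J), ∃ n ∈ N,
    a = u * (MonoidAlgebra.of ℤ (FreeGroup J) n - 1)}

/-- The ideal `d·ℤ[F]` of multiples of the integer `d`. -/
noncomputable def dIdeal {J : Type} (d : ℤ) : Submodule ℤ (MonoidAlgebra ℤ (FreeGroup J)) :=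
  Submodule.span ℤ {a | ∃ u : MonoidAlgebra ℤ (FreeGroup J), a = d • u}

/-!
For `v ∈ H ∩ R` let `N ≤ R` be the normal closure of `v`. The Fox derivatives `D_k(v)`,
`k ∉ K`, vanish because `v` is a word in the `g_j`, `j ∈ K`, so the hypothesis puts `v` in the
normal subgroup `[N, N]`, whence `N = [N, N]`. But `N` is free (Nielsen–Schreier), and a
nontrivial free group maps onto `ℤ`, so it is not perfect: `N = 1` and `v = 1`.
-/

theorem aug_of {J : Type} (g : FreeGroup J) : aug J (MonoidAlgebra.of ℤ (FreeGroup J) g) = 1 := by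
  rw [aug, MonoidAlgebra.lift_of]
  rfl

namespace IsFoxDerivative

variable {J : Type} {k : J}
  {D : MonoidAlgebra ℤ (FreeGroup J) →ₗ[ℤ] MonoidAlgebra ℤ (FreeGroup J)}

theorem map_one (hD : IsFoxDerivative k D) : D 1 = 0 := by
  have h := hD.1 1 1
  rwa [mul_one, mul_one, _root_.map_one (aug J), one_smul, left_eq_add] at h

theorem map_of_eq_zero_of_mem_closure (hD : IsFoxDerivative k D) {K : Set J} (hk : k ∉ K)
    {w : FreeGroup J} (hw : w ∈ Subgroup.closure (FreeGroup.of '' K)) :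
    D (MonoidAlgebra.of ℤ (FreeGroup J) w) = 0 := by
  induction hw using Subgroup.closure_induction with
  | mem x hx =>
    obtain ⟨j, hj, rfl⟩ := hx
    rw [hD.2 j, if_neg (ne_of_mem_of_not_mem hj hk).symm]
  | one => rw [_root_.map_one, hD.map_one]
  | mul x y _ _ hx hy => rw [map_mul, hD.1, hx, hy, zero_mul, smul_zero, add_zero]
  | inv x _ hx =>
    have h : D (MonoidAlgebra.of ℤ (FreeGroup J) (x * x⁻¹)) = 0 := by
      rw [mul_inv_cancel, _root_.map_one, hD.map_one]
    rwa [map_mul, hD.1, hx, zero_mul, zero_add, aug_of, one_smul] at h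

end IsFoxDerivative

theorem IsFreeGroup.subsingleton_of_commutator_eq_top {G : Type*} [Group G] [IsFreeGroup G]
    (h : commutator G = ⊤) : Subsingleton G := by
  have : IsEmpty (IsFreeGroup.Generators G) := ⟨fun a => by
    have ha : IsFreeGroup.lift (fun _ => Multiplicative.ofAdd (1 : ℤ)) (IsFreeGroup.of a) = 1 :=
      Abelianization.commutator_subset_ker _ (h ▸ Subgroup.mem_top _)
    rw [IsFreeGroup.lift_of] at ha
    exact one_ne_zero (Multiplicative.ofAdd.injective ha)⟩
  exact (IsFreeGroup.toFreeGroup G).injective.subsingleton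

theorem Subgroup.eq_bot_of_le_commutator {G : Type*} [Group G] [IsFreeGroup G]
    {N : Subgroup G} (h : N ≤ ⁅N, N⁆) : N = ⊥ := by
  have hN : _root_.commutator N = ⊤ := by
    apply Subgroup.map_injective N.subtype_injective
    rw [Subgroup.map_subtype_commutator, ← MonoidHom.range_eq_map, Subgroup.range_subtype]
    exact (Subgroup.commutator_le_self N).antisymm h
  have := IsFreeGroup.subsingleton_of_commutator_eq_top hN
  exact Subgroup.eq_bot_of_subsingleton N

/-- Converse direction: if for every normal `N ⊆ R` and every `v ∈ N` the vanishing of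
the Fox derivatives `D_k(v) mod ℤ[F]·(N−1)` (`k ∈ J \ K`) implies `v ∈ [N,N]`,
then `H ∩ R = 1`. -/
theorem inter_trivial_of_commutator_mem {J : Type} (K : Set J)
    (H : Subgroup (FreeGroup J)) (hH : H = Subgroup.closure (FreeGroup.of '' K))
    (R : Subgroup (FreeGroup J)) (hR : R.Normal)
    (D : J → (MonoidAlgebra ℤ (FreeGroup J) →ₗ[ℤ] MonoidAlgebra ℤ (FreeGroup J)))
    (hD : ∀ j, IsFoxDerivative j (D j))
    (hyp : ∀ N : Subgroup (FreeGroup J), N.Normal → N ≤ R → ∀ v ∈ N,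
      (∀ k, k ∉ K → D k (MonoidAlgebra.of ℤ (FreeGroup J) v) ∈ NIdeal N) →
        v ∈ (⁅N, N⁆ : Subgroup (FreeGroup J))) :
    H ⊓ R = ⊥ := by
  rw [eq_bot_iff]
  rintro v ⟨hvH, hvR⟩
  set N := Subgroup.normalClosure {v}
  have hvN : v ∈ N := Subgroup.subset_normalClosure rfl
  have hNR : N ≤ R := Subgroup.normalClosure_le_normal (Set.singleton_subset_iff.2 hvR)
  have hv_comm : v ∈ ⁅N, N⁆ := hyp N inferInstance hNR v hvN fun k hk => by
    rw [(hD k).map_of_eq_zero_of_mem_closure hk (hH ▸ hvH)]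
    exact zero_mem _
  have hN : N = ⊥ :=
    Subgroup.eq_bot_of_le_commutator
      (Subgroup.normalClosure_le_normal (Set.singleton_subset_iff.2 hv_comm))
  exact hN ▸ hvN
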